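/- arXiv:1302.1128 — 2 statements merged into one kernel-verified Lean document; each statement's English description precedes it below -/
import Mathlib

section
/- Let x : [−r, δ) → ℝ^n (with 0 < δ ≤ r) satisfy: x(t) = 0 for almost all t ∈ [−r, 0), and for almost all t ∈ [0, δ), |x(t)| ≤ N·t·sup_{0 ≤ s < t} |x(s)| for a constant N ≥ 0, where the supremum is the essential supremum. Then x(t) = 0 for almost all t ∈ [−r, min(δ, 1/(N+1))). -/
open MeasureTheory

theorem stmt3 (n : ℕ) (r δ N : ℝ) (hr : 0 < r) (hδ0 : 0 < δ) (hδr : δ ≤ r) (hN : 0 ≤ N)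
    (x : ℝ → EuclideanSpace ℝ (Fin n))
    (hmeas : Measurable x)
    (hinit : ∀ᵐ t ∂(volume.restrict (Set.Ico (-r) 0)), x t = 0)
    (hbound : ∀ᵐ t ∂(volume.restrict (Set.Ico 0 δ)),
      ‖x t‖ ≤ N * t * essSup (fun s => ‖x s‖) (volume.restrict (Set.Ico 0 t))) :
    ∀ᵐ t ∂(volume.restrict (Set.Ico (-r) (min δ (1 / (N + 1))))), x t = 0 := by
  set T := min δ (1 / (N + 1)) with hT
  have hNpos : (0:ℝ) < N + 1 := by linarith
  have hT0 : 0 < T := lt_min hδ0 (by positivity)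
  have hTδ : T ≤ δ := min_le_left _ _
  have hTN : T ≤ 1 / (N + 1) := min_le_right _ _
  set c : ℝ := N / (N + 1) with hc
  have hc0 : 0 ≤ c := by positivity
  have hc1 : c < 1 := by rw [hc, div_lt_one hNpos]; linarith
  -- the set of essential upper bounds on [0, t)
  set B : ℝ → Set ℝ :=
    fun t => {a | (volume.restrict (Set.Ico 0 t)) {s | a < ‖x s‖} = 0} with hBdef
  have hBae : ∀ t a, a ∈ B t ↔ (∀ᵐ s ∂(volume.restrict (Set.Ico 0 t)), ‖x s‖ ≤ a) := by
    intro t a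
    simp only [hBdef, Set.mem_setOf_eq, ae_iff, not_le]
  have hess : ∀ t, essSup (fun s => ‖x s‖) (volume.restrict (Set.Ico 0 t)) = sInf (B t) :=
    fun t => essSup_eq_sInf _ _
  have hBmono : ∀ {a b : ℝ}, a ≤ b → B b ⊆ B a := by
    intro a b hab y hy
    rw [hBae] at hy ⊢
    exact ae_restrict_of_ae_restrict_of_subset (Set.Ico_subset_Ico_right hab) hy
  have hBlb : ∀ t, 0 < t → ∀ a ∈ B t, 0 ≤ a := by
    intro t ht a ha
    by_contra h
    push_neg at h
    have huniv : {s : ℝ | a < ‖x s‖} = Set.univ :=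
      Set.eq_univ_of_forall fun s => lt_of_lt_of_le h (norm_nonneg _)
    rw [hBdef] at ha
    simp only [Set.mem_setOf_eq] at ha
    rw [huniv, Measure.restrict_apply_univ, Real.volume_Ico, ENNReal.ofReal_eq_zero] at ha
    linarith
  -- sInf of a nonempty bound set is itself a bound
  have hmemInf : ∀ t, 0 < t → (B t).Nonempty → sInf (B t) ∈ B t := by
    intro t ht hne
    rw [hBae]
    have hk : ∀ k : ℕ, ∀ᵐ s ∂(volume.restrict (Set.Ico 0 t)),
        ‖x s‖ ≤ sInf (B t) + 1 / (k + 1) := by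
      intro k
      obtain ⟨a, haB, hlt⟩ := Real.lt_sInf_add_pos hne
        (by positivity : (0:ℝ) < 1 / ((k:ℝ) + 1))
      exact ((hBae t a).1 haB).mono fun s hs => hs.trans hlt.le
    refine (ae_all_iff.2 hk).mono fun s hs => ?_
    refine le_of_forall_pos_le_add fun ε hε => ?_
    obtain ⟨k, hk'⟩ := exists_nat_one_div_lt hε
    exact (hs k).trans (by linarith)
  -- key step: on any [0,s) with s ≤ T on which x is essentially bounded, x = 0 a.e.
  have key : ∀ s, 0 < s → s ≤ T → (B s).Nonempty →
      ∀ᵐ u ∂(volume.restrict (Set.Ico 0 s)), x u = 0 := by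
    intro s hs0 hsT hne
    set M := sInf (B s) with hMdef
    have hM0 : 0 ≤ M := le_csInf hne (hBlb s hs0)
    have hMmem : M ∈ B s := hmemInf s hs0 hne
    have hsub : Set.Ico (0:ℝ) s ⊆ Set.Ico 0 δ := Set.Ico_subset_Ico_right (hsT.trans hTδ)
    have hb' : ∀ᵐ u ∂(volume.restrict (Set.Ico 0 s)), ‖x u‖ ≤ N * u * sInf (B u) := by
      have h := ae_restrict_of_ae_restrict_of_subset hsub hbound
      exact h.mono fun u hu => by rwa [hess u] at hu
    have hmem0 : ∀ᵐ u ∂(volume.restrict (Set.Ico 0 s)), u ∈ Set.Ico 0 s :=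
      ae_restrict_mem measurableSet_Ico
    have hne0 : ∀ᵐ u ∂(volume.restrict (Set.Ico 0 s)), u ≠ 0 := by
      rw [ae_iff]
      have h1 : {u : ℝ | ¬ u ≠ 0} = {0} := by ext u; simp
      rw [h1, Measure.restrict_apply (measurableSet_singleton 0)]
      exact measure_mono_null Set.inter_subset_left (measure_singleton 0)
    have hcM : c * M ∈ B s := by
      rw [hBae]
      filter_upwards [hb', hmem0, hne0] with u hu1 hu2 hu3
      have hu0 : 0 < u := lt_of_le_of_ne hu2.1 (Ne.symm hu3)
      have hBsub : B s ⊆ B u := hBmono hu2.2.le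
      have hBuNe : (B u).Nonempty := hne.mono hBsub
      have h1 : sInf (B u) ≤ M :=
        csInf_le_csInf ⟨0, fun a ha => hBlb u hu0 a ha⟩ hne hBsub
      have h2 : 0 ≤ sInf (B u) := le_csInf hBuNe (hBlb u hu0)
      have h3 : N * u ≤ c := by
        have hu' : u ≤ 1 / (N + 1) := le_trans hu2.2.le (hsT.trans hTN)
        calc N * u ≤ N * (1 / (N + 1)) := mul_le_mul_of_nonneg_left hu' hN
          _ = c := by rw [hc]; field_simp
      calc ‖x u‖ ≤ N * u * sInf (B u) := hu1
        _ ≤ c * M := mul_le_mul h3 h1 h2 hc0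
    have hMle : M ≤ c * M := csInf_le ⟨0, fun a ha => hBlb s hs0 a ha⟩ hcM
    have hMz : M = 0 := le_antisymm (by nlinarith) hM0
    have hfin := (hBae s M).1 hMmem
    exact hfin.mono fun u hu => norm_le_zero_iff.1 (hMz ▸ hu)
  -- the supremum of times where x is essentially bounded
  set S : Set ℝ := {t | t ∈ Set.Icc 0 T ∧ (B t).Nonempty} with hSdef
  have hS0 : (0:ℝ) ∈ S := by
    refine ⟨⟨le_refl 0, hT0.le⟩, ⟨0, ?_⟩⟩
    simp [hBdef, Set.Ico_self]
  have hSne : S.Nonempty := ⟨0, hS0⟩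
  have hSbdd : BddAbove S := ⟨T, fun t ht => ht.1.2⟩
  set t₁ := sSup S with ht₁def
  have ht₁0 : 0 ≤ t₁ := le_csSup hSbdd hS0
  have ht₁T : t₁ ≤ T := csSup_le hSne fun t ht => ht.1.2
  -- x = 0 a.e. on [0, t₁)
  have hB1 : ∀ᵐ u : ℝ ∂volume, u ∈ Set.Ico 0 t₁ → x u = 0 := by
    have hk : ∀ k : ℕ, ∀ᵐ u : ℝ ∂volume,
        u ∈ Set.Ico 0 (t₁ - t₁ / (k + 1)) → x u = 0 := by
      intro k
      set sk := t₁ - t₁ / (k + 1) with hskdef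
      by_cases hsk : 0 < sk
      · have ht₁pos : 0 < t₁ := by
          by_contra h
          push_neg at h
          have : t₁ = 0 := le_antisymm h ht₁0
          rw [hskdef, this] at hsk
          simp at hsk
        have hsklt : sk < t₁ := by
          have : 0 < t₁ / (k + 1) := by positivity
          rw [hskdef]; linarith
        obtain ⟨t, htS, hlt⟩ := exists_lt_of_lt_csSup hSne hsklt
        have hBne : (B sk).Nonempty := htS.2.mono (hBmono hlt.le)
        have := key sk hsk (le_trans hsklt.le ht₁T) hBne
        exact (ae_restrict_iff' measurableSet_Ico).1 this
      · push_neg at hsk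
        filter_upwards with u hu
        exact absurd (lt_of_le_of_lt hu.1 hu.2) (not_lt.2 hsk)
    refine (ae_all_iff.2 hk).mono fun u hu hmem => ?_
    obtain ⟨hu0, hut⟩ := hmem
    have ht₁pos : 0 < t₁ := lt_of_le_of_lt hu0 hut
    have hsub : 0 < t₁ - u := sub_pos.2 hut
    obtain ⟨k, hk'⟩ := exists_nat_gt (t₁ / (t₁ - u))
    refine hu k ⟨hu0, ?_⟩
    have hk1 : (0:ℝ) < (k:ℝ) + 1 := by positivity
    have h2 : t₁ / (t₁ - u) < (k:ℝ) + 1 := hk'.trans (lt_add_one _)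
    have h3 : t₁ < ((k:ℝ) + 1) * (t₁ - u) := (div_lt_iff₀ hsub).1 h2
    have h4 : t₁ / ((k:ℝ) + 1) < t₁ - u := by
      rw [div_lt_iff₀ hk1]; nlinarith
    linarith
  -- x = 0 a.e. on (t₁, T)
  have hB2 : ∀ᵐ u : ℝ ∂volume, u ∈ Set.Ioo t₁ T → x u = 0 := by
    have hbg : ∀ᵐ u : ℝ ∂volume, u ∈ Set.Ico 0 δ → ‖x u‖ ≤ N * u * sInf (B u) := by
      have := (ae_restrict_iff' measurableSet_Ico).1 hbound
      exact this.mono fun u hu hm => by rw [← hess u]; exact hu hm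
    refine hbg.mono fun u hu hmem => ?_
    obtain ⟨hu1, hu2⟩ := hmem
    have hu0 : 0 ≤ u := ht₁0.trans hu1.le
    have hBempty : B u = ∅ := by
      rw [← Set.not_nonempty_iff_eq_empty]
      intro hne
      have : u ∈ S := ⟨⟨hu0, hu2.le⟩, hne⟩
      exact absurd (le_csSup hSbdd this) (not_le.2 hu1)
    have := hu ⟨hu0, lt_of_lt_of_le hu2 hTδ⟩
    rw [hBempty, Real.sInf_empty, mul_zero] at this
    exact norm_le_zero_iff.1 this
  have h0 : ∀ᵐ u : ℝ ∂volume, u ∈ Set.Ico (-r) 0 → x u = 0 :=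
    (ae_restrict_iff' measurableSet_Ico).1 hinit
  have hne_t₁ : ∀ᵐ u : ℝ ∂volume, u ≠ t₁ := by
    rw [ae_iff]
    have h1 : {u : ℝ | ¬ u ≠ t₁} = {t₁} := by ext u; simp
    rw [h1]
    exact measure_singleton t₁
  rw [ae_restrict_iff' measurableSet_Ico]
  filter_upwards [h0, hB1, hB2, hne_t₁] with u h1 h2 h3 h4 hmem
  obtain ⟨hu1, hu2⟩ := hmem
  rcases lt_or_ge u 0 with h | h
  · exact h1 ⟨hu1, h⟩
  rcases lt_trichotomy u t₁ with h' | h' | h'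
  · exact h2 ⟨h, h'⟩
  · exact absurd h' h4
  · exact h3 ⟨h', hu2⟩
end

section
/- Let g ∈ ℝ with |g| < 2 and choose k > 2/(2 − |g|). Define W(p, v) = |p| + k|v| on ℝ². Then for any essentially bounded measurable functions p, v : [−1, 0) → ℝ and any d ∈ [−1, 1], the quantity |d·∫_{−1}^{0} v(s) ds + g·d·∫_{−1}^{0} (1+s) p(s) ds| is bounded by λ · ess sup_{−1 ≤ s < 0} W(p(s), v(s)), where λ = |g|/2 + 1/k < 1. -/
/-!
Almost everywhere on `[-1, 0)` we have `|p| ≤ M` and `|v| ≤ M / k`, where `M` is the essential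
supremum of `W(p, v)`. Hence `|∫ v| ≤ M / k` and `|∫ (1 + s) p(s) ds| ≤ M ∫ (1 + s) ds = M / 2`,
and `|d| ≤ 1` gives the bound `(|g| / 2 + 1 / k) M`.
-/

open MeasureTheory Set

lemma abs_div_two_add_one_div_lt_one {g k : ℝ} (hg : |g| < 2) (hk : 2 / (2 - |g|) < k) :
    |g| / 2 + 1 / k < 1 := by
  have hg2 : 0 < 2 - |g| := by linarith
  have hk0 : 0 < k := (div_pos two_pos hg2).trans hk
  rw [div_lt_iff₀ hg2] at hk
  rw [div_add_div _ _ two_ne_zero hk0.ne', div_lt_one (by positivity)]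
  linarith

lemma ae_Ioc_le_essSup_restrict_Ico {f : ℝ → ℝ} {a b : ℝ} (hf : ∃ C, ∀ s, f s ≤ C) :
    ∀ᵐ s, s ∈ Ioc a b → f s ≤ essSup f (volume.restrict (Ico a b)) := by
  rw [← ae_restrict_iff' measurableSet_Ioc, ← restrict_Ico_eq_restrict_Ioc]
  exact ae_le_essSup (Filter.isBoundedUnder_of hf)

lemma abs_intervalIntegral_mul_le {w f : ℝ → ℝ} {a b M : ℝ} (hab : a ≤ b)
    (hw : ∀ s ∈ Ioc a b, 0 ≤ w s) (hwi : IntervalIntegrable w volume a b)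
    (hf : ∀ᵐ s, s ∈ Ioc a b → |f s| ≤ M) :
    |∫ s in a..b, w s * f s| ≤ M * ∫ s in a..b, w s := by
  have hwf : ∀ᵐ s, s ∈ Ioc a b → ‖w s * f s‖ ≤ M * w s := by
    filter_upwards [hf] with s hfs hs
    rw [Real.norm_eq_abs, abs_mul, abs_of_nonneg (hw s hs), mul_comm M]
    exact mul_le_mul_of_nonneg_left (hfs hs) (hw s hs)
  rw [← intervalIntegral.integral_const_mul, ← Real.norm_eq_abs]
  exact intervalIntegral.norm_integral_le_of_norm_le hab hwf (hwi.const_mul M)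

lemma integral_one_add_neg_one_zero : ∫ s in (-1 : ℝ)..0, (1 + s) = 1 / 2 := by
  rw [intervalIntegral.integral_add intervalIntegrable_const intervalIntegral.intervalIntegrable_id]
  norm_num [integral_id]

theorem stmt5_general (g k : ℝ) (hg : |g| < 2) (hk : 2 / (2 - |g|) < k)
    (p v : ℝ → ℝ)
    (hpb : ∃ C, ∀ s, |p s| ≤ C) (hvb : ∃ C, ∀ s, |v s| ≤ C)
    (d : ℝ) (hd : d ∈ Set.Icc (-1 : ℝ) 1) :
    |d * (∫ s in (-1:ℝ)..0, v s) + g * d * (∫ s in (-1:ℝ)..0, (1 + s) * p s)|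
      ≤ (|g| / 2 + 1 / k) *
        essSup (fun s => |p s| + k * |v s|) (volume.restrict (Set.Ico (-1 : ℝ) 0))
    ∧ |g| / 2 + 1 / k < 1 := by
  refine ⟨?_, abs_div_two_add_one_div_lt_one hg hk⟩
  set M := essSup (fun s => |p s| + k * |v s|) (volume.restrict (Ico (-1 : ℝ) 0))
  have hk0 : 0 < k := (div_pos two_pos (by linarith)).trans hk
  obtain ⟨Cp, hCp⟩ := hpb
  obtain ⟨Cv, hCv⟩ := hvb
  have hW : ∀ᵐ s, s ∈ Ioc (-1 : ℝ) 0 → |p s| + k * |v s| ≤ M :=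
    ae_Ioc_le_essSup_restrict_Ico ⟨Cp + k * Cv, fun s =>
      add_le_add (hCp s) (mul_le_mul_of_nonneg_left (hCv s) hk0.le)⟩
  have hv : |∫ s in (-1:ℝ)..0, v s| ≤ M / k := by
    have hle := abs_intervalIntegral_mul_le (w := fun _ => 1) (f := v)
      (a := -1) (b := 0) (M := M / k) (by norm_num) (fun _ _ => zero_le_one)
      intervalIntegrable_const <| by
        filter_upwards [hW] with s hs hs'
        rw [le_div_iff₀' hk0]
        linarith [hs hs', abs_nonneg (p s)]
    simpa using hle
  have hp : |∫ s in (-1:ℝ)..0, (1 + s) * p s| ≤ M / 2 := by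
    have hle := abs_intervalIntegral_mul_le (w := fun s => 1 + s) (f := p)
      (a := -1) (b := 0) (M := M) (by norm_num)
      (fun s hs => by linarith [hs.1])
      ((continuous_const.add continuous_id).intervalIntegrable _ _) <| by
        filter_upwards [hW] with s hs hs'
        linarith [hs hs', mul_nonneg hk0.le (abs_nonneg (v s))]
    rwa [integral_one_add_neg_one_zero, mul_one_div] at hle
  have hd1 : |d| ≤ 1 := abs_le.mpr hd
  calc |d * (∫ s in (-1:ℝ)..0, v s) + g * d * (∫ s in (-1:ℝ)..0, (1 + s) * p s)|
      ≤ |d| * |∫ s in (-1:ℝ)..0, v s| + |g| * |d| * |∫ s in (-1:ℝ)..0, (1 + s) * p s| := by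
        rw [← abs_mul, ← abs_mul, ← abs_mul]
        exact abs_add_le _ _
    _ ≤ 1 * (M / k) + |g| * 1 * (M / 2) := by gcongr
    _ = (|g| / 2 + 1 / k) * M := by ring

theorem stmt5 (g k : ℝ) (hg : |g| < 2) (hk : 2 / (2 - |g|) < k)
    (p v : ℝ → ℝ) (hp : Measurable p) (hv : Measurable v)
    (hpb : ∃ C, ∀ s, |p s| ≤ C) (hvb : ∃ C, ∀ s, |v s| ≤ C)
    (d : ℝ) (hd : d ∈ Set.Icc (-1 : ℝ) 1) :
    |d * (∫ s in (-1:ℝ)..0, v s) + g * d * (∫ s in (-1:ℝ)..0, (1 + s) * p s)|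
      ≤ (|g| / 2 + 1 / k) *
        essSup (fun s => |p s| + k * |v s|) (volume.restrict (Set.Ico (-1 : ℝ) 0))
    ∧ |g| / 2 + 1 / k < 1 :=
  stmt5_general g k hg hk p v hpb hvb d hd
end
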